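/- arXiv:math/0408213 — 6 statements merged into one kernel-verified Lean document; each statement's English description precedes it below -/
import Mathlib

section
/- Let (X, d) be a metric space, let ≈ be an equivalence relation on X (its classes are called leaves, and [x] denotes the leaf of x), and let a group D act on X by maps preserving ≈ (if x ≈ y then g·x ≈ g·y for all g ∈ D). Let c > 0 and assume the action is c-leafwise expansive: for all x, y ∈ X with ¬(x ≈ y) there exists g ∈ D such that d_S([g·x], [g·y]) > c, where d_S(A, B) = inf{d(a, b) : a ∈ A, b ∈ B}. Let h : X → X be a map such that (i) d(h(x), x) < c for all x ∈ X, and (ii) h commutes with the action modulo leaves: h(g·x) ≈ g·h(x) for all g ∈ D and x ∈ X. Then h(x) ≈ x for every x ∈ X; that is, h maps every leaf into itself. -/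
/-! If `h x` and `x` lay on different leaves, expansivity would give `g` moving their leaves
more than `c` apart; but `h (g • x)` lies on the leaf of `g • h x` and within `c` of `g • x`. -/

/-- The set distance `d_S(A, B) = inf {d(a,b) : a ∈ A, b ∈ B}` between two subsets
of a metric space. -/
noncomputable def setDist {X : Type*} [MetricSpace X] (A B : Set X) : ℝ :=
  sInf (Set.image2 dist A B)

theorem setDist_le_dist {X : Type*} [MetricSpace X] {A B : Set X} {a b : X}
    (ha : a ∈ A) (hb : b ∈ B) : setDist A B ≤ dist a b :=
  csInf_le ⟨0, by rintro _ ⟨_, _, _, _, rfl⟩; exact dist_nonneg⟩ ⟨a, ha, b, hb, rfl⟩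

theorem stmt_2_general {X : Type*} [MetricSpace X] {D : Type*} [Group D] [MulAction D X]
    (E : X → X → Prop) (hE : Equivalence E)
    (c : ℝ)
    (hexp : ∀ x y : X, ¬ E x y →
      ∃ g : D, c < setDist {a | E (g • x) a} {b | E (g • y) b})
    (h : X → X)
    (hsmall : ∀ x : X, dist (h x) x < c)
    (hcomm : ∀ (g : D) (x : X), E (h (g • x)) (g • h x)) :
    ∀ x : X, E (h x) x := by
  intro x
  by_contra hne
  obtain ⟨g, hg⟩ := hexp (h x) x hne
  have hle : setDist {a | E (g • h x) a} {b | E (g • x) b} ≤ dist (h (g • x)) (g • x) :=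
    setDist_le_dist (hE.symm (hcomm g x)) (hE.refl (g • x))
  exact lt_asymm (hsmall (g • x)) (hg.trans_le hle)

/-- Lemma 5.2: if a group `D` acts on a metric space `X` preserving an equivalence
relation `E` (whose classes are the leaves), the action is `c`-leafwise expansive,
and `h : X → X` moves every point by less than `c` and commutes with the action
modulo leaves, then `h` maps every leaf into itself. -/
theorem stmt_2 {X : Type*} [MetricSpace X] {D : Type*} [Group D] [MulAction D X]
    (E : X → X → Prop) (hE : Equivalence E)
    (hact : ∀ (g : D) (x y : X), E x y → E (g • x) (g • y))
    (c : ℝ) (hc : 0 < c)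
    (hexp : ∀ x y : X, ¬ E x y →
      ∃ g : D, c < setDist {a | E (g • x) a} {b | E (g • y) b})
    (h : X → X)
    (hsmall : ∀ x : X, dist (h x) x < c)
    (hcomm : ∀ (g : D) (x : X), E (h (g • x)) (g • h x)) :
    ∀ x : X, E (h x) x :=
  stmt_2_general E hE c hexp h hsmall hcomm
end

section
/- Let G be a locally compact Hausdorff topological group with a left Haar measure μ, and let ϱ : G → G be a topological group automorphism (a group automorphism that is also a homeomorphism). Let B ⊆ G be a compact set with nonempty interior, and assume ϱ is contracting in the sense that for every compact set K ⊆ G there is an N such that K ⊆ ϱ⁻ⁿ(B) for all n ≥ N. Let C ⊆ G be a measurable set such that μ(ϱⁿ(B) \ C) / μ(ϱⁿ(B)) → 0 as n → ∞ (that is, the identity is a density point of C with respect to the family of balls ϱⁿ(B)). Then the sets ϱ⁻ⁿ(C) converge in measure to G: for every compact set K ⊆ G, μ(K \ ϱ⁻ⁿ(C)) → 0 as n → ∞. -/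
open MeasureTheory Filter Topology Set Function
open scoped ENNReal

/-!
A topological automorphism `ϱ` multiplies Haar measure by a constant (its modulus), so the
density ratio `μ (A \ D) / μ A` of relatively compact sets is invariant under `ϱ`. If
`K ⊆ ϱ⁻ᴺ(B)` and `n ≥ N`, then `ϱⁿ` maps `ϱ⁻ᴺ(B)` onto the ball `ϱⁿ⁻ᴺ(B)` and `ϱ⁻ⁿ(C)` onto `C`,
hence `μ (K \ ϱ⁻ⁿ(C)) ≤ μ (ϱⁿ⁻ᴺ(B) \ C) / μ (ϱⁿ⁻ᴺ(B)) * μ (ϱ⁻ᴺ(B))`, which tends to `0`.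
-/

def ScalesMeasureBy {X : Type*} [TopologicalSpace X] [MeasurableSpace X]
    (μ : Measure X) (f : X → X) (c : ℝ≥0∞) : Prop :=
  ∀ s : Set X, IsCompact (closure s) → μ (f '' s) = c * μ s

theorem MulEquiv.exists_scalesMeasureBy {G : Type*} [Group G] [TopologicalSpace G]
    [IsTopologicalGroup G] [LocallyCompactSpace G] [MeasurableSpace G] [BorelSpace G]
    (μ : Measure G) [μ.IsHaarMeasure] (f : G ≃* G) (hf : Continuous f)
    (hfsymm : Continuous f.symm) :
    ∃ c : ℝ≥0∞, c ≠ 0 ∧ c ≠ ∞ ∧ ScalesMeasureBy μ f c := by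
  let e : G ≃ₜ* G := ⟨f, hf, hfsymm⟩
  refine ⟨Measure.haarScalarFactor (μ.map e.symm) μ,
    ENNReal.coe_ne_zero.2 (Measure.haarScalarFactor_pos_of_isHaarMeasure _ _).ne',
    ENNReal.coe_ne_top, fun s hs => ?_⟩
  calc μ (f '' s) = μ.map e.symm s := by
        rw [show ⇑e.symm = e.symm.toHomeomorph.toMeasurableEquiv from rfl,
          MeasurableEquiv.map_apply]
        exact congrArg μ (f.toEquiv.image_eq_preimage_symm s)
    _ = _ := Measure.measure_isMulInvariant_eq_smul_of_isCompact_closure _ _ hs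

theorem ScalesMeasureBy.iterate {X : Type*} [TopologicalSpace X] [R1Space X]
    [MeasurableSpace X] {μ : Measure X} {f : X → X} {c : ℝ≥0∞}
    (h : ScalesMeasureBy μ f c) (hf : Continuous f) (n : ℕ) :
    ScalesMeasureBy μ f^[n] (c ^ n) := by
  induction n with
  | zero => intro s _; simp
  | succ n ih =>
    intro s hs
    have hs' : IsCompact (closure (f^[n] '' s)) :=
      (hs.image (hf.iterate n)).closure_of_subset (image_mono subset_closure)
    rw [iterate_succ', image_comp, h _ hs', ih s hs, pow_succ', mul_assoc]

theorem ScalesMeasureBy.measure_image_diff_div_measure_image {X : Type*} [TopologicalSpace X]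
    [R1Space X] [MeasurableSpace X] {μ : Measure X} {f : X → X} {c : ℝ≥0∞}
    (h : ScalesMeasureBy μ f c) (hc0 : c ≠ 0) (hc : c ≠ ∞) (hf : Injective f)
    {A : Set X} (hA : IsCompact (closure A)) (D : Set X) :
    μ (f '' A \ f '' D) / μ (f '' A) = μ (A \ D) / μ A := by
  rw [← image_sdiff hf, h _ (hA.closure_of_subset (sdiff_subset.trans subset_closure)), h _ hA,
    ENNReal.mul_div_mul_left _ _ hc0 hc]

theorem Function.LeftInverse.iterate_image_iterate_image {α : Type*} {f g : α → α}
    (h : LeftInverse f g) {m n : ℕ} (hmn : m ≤ n) (s : Set α) :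
    f^[n] '' (g^[m] '' s) = f^[n - m] '' s := by
  obtain ⟨k, rfl⟩ := Nat.exists_eq_add_of_le hmn
  rw [Nat.add_sub_cancel_left, add_comm, iterate_add, image_comp, (h.iterate m).image_image]

theorem stmt_3_general {G : Type*} [Group G] [TopologicalSpace G] [IsTopologicalGroup G]
    [LocallyCompactSpace G] [MeasurableSpace G] [BorelSpace G]
    (μ : Measure G) [μ.IsHaarMeasure]
    (ϱ : G ≃* G) (hϱ : Continuous ϱ) (hϱsymm : Continuous ϱ.symm)
    (B : Set G) (hB : IsCompact B)
    (hcontr : ∀ K : Set G, IsCompact K →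
      ∃ N : ℕ, ∀ n ≥ N, K ⊆ (⇑ϱ.symm)^[n] '' B)
    (C : Set G)
    (hdens : Tendsto
      (fun n : ℕ => μ (((⇑ϱ)^[n] '' B) \ C) / μ ((⇑ϱ)^[n] '' B)) atTop (𝓝 0)) :
    ∀ K : Set G, IsCompact K →
      Tendsto (fun n : ℕ => μ (K \ ((⇑ϱ.symm)^[n] '' C))) atTop (𝓝 0) := by
  intro K hK
  obtain ⟨N, hN⟩ := hcontr K hK
  set A := (⇑ϱ.symm)^[N] '' B
  have hA : IsCompact A := hB.image (hϱsymm.iterate N)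
  obtain ⟨c, hc0, hc, hscale⟩ := ϱ.exists_scalesMeasureBy μ hϱ hϱsymm
  have hinv : LeftInverse ϱ ϱ.symm := ϱ.right_inv
  have hbound : ∀ n ≥ N, μ (K \ (⇑ϱ.symm)^[n] '' C) ≤
      μ (((⇑ϱ)^[n - N] '' B) \ C) / μ ((⇑ϱ)^[n - N] '' B) * μ A := by
    intro n hn
    set D := (⇑ϱ.symm)^[n] '' C
    calc μ (K \ D) ≤ μ (A \ D) := measure_mono (sdiff_subset_sdiff_left (hN N le_rfl))
      _ = μ (A \ D) / μ A * μ A :=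
        (ENNReal.div_mul_cancel' (measure_mono_null sdiff_subset) (absurd · hA.measure_ne_top)).symm
      _ = μ ((⇑ϱ)^[n] '' A \ (⇑ϱ)^[n] '' D) / μ ((⇑ϱ)^[n] '' A) * μ A := by
        rw [(hscale.iterate hϱ n).measure_image_diff_div_measure_image (pow_ne_zero n hc0)
          (ENNReal.pow_ne_top hc) (ϱ.injective.iterate n) hA.closure D]
      _ = _ := by
        rw [hinv.iterate_image_iterate_image hn, hinv.iterate_image_iterate_image le_rfl,
          Nat.sub_self, iterate_zero, image_id]
  have hlim : Tendsto (fun n => μ (((⇑ϱ)^[n - N] '' B) \ C) / μ ((⇑ϱ)^[n - N] '' B) * μ A)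
      atTop (𝓝 0) := by
    simpa using ENNReal.Tendsto.mul_const (hdens.comp (tendsto_sub_atTop_nat N))
      (Or.inr hA.measure_ne_top)
  exact tendsto_of_tendsto_of_tendsto_of_le_of_le' tendsto_const_nhds hlim
    (Eventually.of_forall fun _ => zero_le) (eventually_atTop.2 ⟨N, hbound⟩)

/-- Proposition 5.1: let `ϱ` be a contracting topological automorphism of a locally
compact Hausdorff group `G` with left Haar measure `μ`, `B` a compact set with
nonempty interior, and `C` a measurable set such that the identity is a density
point of `C` with respect to the balls `ϱⁿ(B)` (i.e. `μ(ϱⁿ(B) \ C)/μ(ϱⁿ(B)) → 0`).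
Then the sets `ϱ⁻ⁿ(C)` converge in measure to `G`: for every compact `K`,
`μ(K \ ϱ⁻ⁿ(C)) → 0`. -/
theorem stmt_3 {G : Type*} [Group G] [TopologicalSpace G] [IsTopologicalGroup G]
    [LocallyCompactSpace G] [T2Space G] [MeasurableSpace G] [BorelSpace G]
    (μ : Measure G) [μ.IsHaarMeasure]
    (ϱ : G ≃* G) (hϱ : Continuous ϱ) (hϱsymm : Continuous ϱ.symm)
    (B : Set G) (hB : IsCompact B) (hBint : (interior B).Nonempty)
    (hcontr : ∀ K : Set G, IsCompact K →
      ∃ N : ℕ, ∀ n ≥ N, K ⊆ (⇑ϱ.symm)^[n] '' B)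
    (C : Set G) (hC : MeasurableSet C)
    (hdens : Tendsto
      (fun n : ℕ => μ (((⇑ϱ)^[n] '' B) \ C) / μ ((⇑ϱ)^[n] '' B)) atTop (𝓝 0)) :
    ∀ K : Set G, IsCompact K →
      Tendsto (fun n : ℕ => μ (K \ ((⇑ϱ.symm)^[n] '' C))) atTop (𝓝 0) :=
  stmt_3_general μ ϱ hϱ hϱsymm B hB hcontr C hdens
end

section
/- Let 𝔤 be a finite-dimensional real Lie algebra (equipped with any norm; all norms are equivalent) and let σ : 𝔤 → 𝔤 be a Lie algebra automorphism. Then the set 𝔣ˢ = {v ∈ 𝔤 : σⁿ(v) → 0 as n → ∞} is a Lie subalgebra of 𝔤, and 𝔣ˢ is nilpotent as a Lie algebra. -/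
/-!
The stable set is a subspace, and the bracket, being bilinear on a finite-dimensional space, is
jointly continuous, so `σⁿ ⁅v, w⁆ = ⁅σⁿ v, σⁿ w⁆ → 0` for stable `v, w`. Hence the stable set is a
Lie subalgebra `𝔣`, on which `σ` restricts to an automorphism `τ` with `τⁿ → 0` pointwise.

Measuring sizes in coordinates, pointwise decay on a finite-dimensional space is uniform: some
power `R = τᴺ` satisfies `‖R z‖ ≤ c ‖z‖` with `c < 1`, while `‖z‖ ≤ M ‖R z‖` because `R` is
invertible. For `z = (ad x)ᵏ y` we have `Rᵐ z = (ad (Rᵐ x))ᵏ (Rᵐ y)`, so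
`‖z‖ ≤ Mᵐ ‖Rᵐ z‖ ≤ C (M cᵏ⁺¹)ᵐ`; once `M cᵏ⁺¹ < 1` this forces `z = 0`. Thus every `ad x` is
nilpotent on `𝔣`, and Engel's theorem makes `𝔣` nilpotent.
-/

open Filter Topology Function

namespace LinearMap

variable {R M : Type*} [Semiring R] [AddCommMonoid M] [Module R M] [TopologicalSpace M]
  [ContinuousAdd M] [ContinuousConstSMul R M]

def stableSubmodule (f : M →ₗ[R] M) : Submodule R M where
  carrier := {v | Tendsto (fun n => f^[n] v) atTop (𝓝 0)}
  add_mem' {v w} hv hw := by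
    simpa only [Set.mem_ofPred_eq, iterate_map_add, add_zero] using hv.add hw
  zero_mem' := by
    simpa only [Set.mem_ofPred_eq, iterate_map_zero] using tendsto_const_nhds
  smul_mem' c v hv := by
    simpa only [Set.mem_ofPred_eq, ← Module.End.pow_apply, map_smul, smul_zero] using
      hv.const_smul c

theorem mem_stableSubmodule {f : M →ₗ[R] M} {v : M} :
    v ∈ f.stableSubmodule ↔ Tendsto (fun n => f^[n] v) atTop (𝓝 0) :=
  Iff.rfl

theorem apply_mem_stableSubmodule_iff {f : M →ₗ[R] M} {v : M} :
    f v ∈ f.stableSubmodule ↔ v ∈ f.stableSubmodule := by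
  simp only [mem_stableSubmodule, ← iterate_succ_apply]
  exact tendsto_add_atTop_iff_nat (f := fun n => f^[n] v) 1

end LinearMap

section FiniteDimensional

variable {𝕜 E F G : Type*} [NontriviallyNormedField 𝕜] [CompleteSpace 𝕜]
  [AddCommGroup E] [Module 𝕜 E] [TopologicalSpace E] [IsTopologicalAddGroup E]
  [ContinuousSMul 𝕜 E] [T2Space E] [FiniteDimensional 𝕜 E]
  [AddCommGroup F] [Module 𝕜 F] [TopologicalSpace F] [IsTopologicalAddGroup F]
  [ContinuousSMul 𝕜 F] [T2Space F] [FiniteDimensional 𝕜 F]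
  [AddCommGroup G] [Module 𝕜 G] [TopologicalSpace G] [IsTopologicalAddGroup G]
  [ContinuousSMul 𝕜 G]

theorem LinearMap.continuous_uncurry_of_finiteDimensional (f : E →ₗ[𝕜] F →ₗ[𝕜] G) :
    Continuous fun p : E × F => f p.1 p.2 := by
  let b := Module.finBasis 𝕜 E
  have hf : (fun p : E × F => f p.1 p.2) = fun p => ∑ i, b.equivFunL p.1 i • f (b i) p.2 := by
    ext p
    nth_rewrite 1 [← b.sum_equivFun p.1]
    simp only [map_sum, map_smul, LinearMap.sum_apply, LinearMap.smul_apply]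
    rfl
  rw [hf]
  exact continuous_finsetSum _ fun i _ =>
    ((continuous_apply i).comp (b.equivFunL.continuous.comp continuous_fst)).smul
      ((f (b i)).continuous_of_finiteDimensional.comp continuous_snd)

end FiniteDimensional

instance LieSubalgebra.instIsTopologicalAddGroup {R L : Type*} [CommRing R] [LieRing L]
    [LieAlgebra R L] [TopologicalSpace L] [IsTopologicalAddGroup L] (K : LieSubalgebra R L) :
    IsTopologicalAddGroup K :=
  inferInstanceAs (IsTopologicalAddGroup K.toSubmodule)

section Lie

variable {𝕜 L : Type*} [NontriviallyNormedField 𝕜] [CompleteSpace 𝕜] [LieRing L]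
  [LieAlgebra 𝕜 L] [TopologicalSpace L] [IsTopologicalAddGroup L] [ContinuousSMul 𝕜 L]
  [T2Space L] [FiniteDimensional 𝕜 L]

def LieHom.stableLieSubalgebra (σ : L →ₗ⁅𝕜⁆ L) : LieSubalgebra 𝕜 L :=
  { (σ : L →ₗ[𝕜] L).stableSubmodule with
    lie_mem' := fun {v w} hv hw => by
      have hσ : Semiconj₂ σ (⁅·, ·⁆) (⁅·, ·⁆) := σ.map_lie
      have hlie := LinearMap.continuous_uncurry_of_finiteDimensional
        (LieAlgebra.ad 𝕜 L : L →ₗ[𝕜] Module.End 𝕜 L)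
      have := (hlie.tendsto (0, 0)).comp (hv.prodMk_nhds hw)
      refine LinearMap.mem_stableSubmodule.mpr ?_
      simpa [comp_def, (hσ.iterate _) v w] using this }

theorem LieHom.mem_stableLieSubalgebra {σ : L →ₗ⁅𝕜⁆ L} {v : L} :
    v ∈ σ.stableLieSubalgebra ↔ Tendsto (fun n => σ^[n] v) atTop (𝓝 0) :=
  Iff.rfl

theorem LieEquiv.map_stableLieSubalgebra (σ : L ≃ₗ⁅𝕜⁆ L) :
    (σ : L →ₗ⁅𝕜⁆ L).stableLieSubalgebra.map σ = (σ : L →ₗ⁅𝕜⁆ L).stableLieSubalgebra := by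
  ext v
  simp only [LieSubalgebra.mem_map]
  constructor
  · rintro ⟨w, hw, rfl⟩
    exact LinearMap.apply_mem_stableSubmodule_iff.mpr hw
  · intro hv
    refine ⟨σ.symm v, ?_, σ.apply_symm_apply v⟩
    have hσv : (σ.toLieHom : L →ₗ[𝕜] L) (σ.symm v) = v := σ.apply_symm_apply v
    exact LinearMap.apply_mem_stableSubmodule_iff.mp (by rw [hσv]; exact hv)

end Lie

theorem norm_iterate_le {α : Type*} [Norm α] {f : α → α} {c : ℝ} (hc : 0 ≤ c)
    (hf : ∀ z, ‖f z‖ ≤ c * ‖z‖) (n : ℕ) (z : α) : ‖f^[n] z‖ ≤ c ^ n * ‖z‖ := by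
  induction n with
  | zero => simp
  | succ n ih =>
    rw [iterate_succ_apply', pow_succ', mul_assoc]
    exact (hf _).trans (mul_le_mul_of_nonneg_left ih hc)

theorem norm_iterate_le_of_semiconj₂ {E : Type*} [SeminormedAddCommGroup E] {R Rinv : E → E}
    {op : E → E → E} (hR : Semiconj₂ R op op) (hinv : LeftInverse Rinv R) {K c M : ℝ}
    (hK : 0 ≤ K) (hc : 0 ≤ c) (hM : 0 ≤ M) (hop : ∀ x y, ‖op x y‖ ≤ K * ‖x‖ * ‖y‖)
    (hRc : ∀ z, ‖R z‖ ≤ c * ‖z‖) (hRinv : ∀ z, ‖Rinv z‖ ≤ M * ‖z‖) (x y : E) (k m : ℕ) :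
    ‖(op x)^[k] y‖ ≤ (K * ‖x‖) ^ k * ‖y‖ * (M * c ^ (k + 1)) ^ m := by
  have hRm : Semiconj R^[m] (op x) (op (R^[m] x)) := (hR.iterate m) x
  calc ‖(op x)^[k] y‖ = ‖Rinv^[m] (R^[m] ((op x)^[k] y))‖ := by rw [(hinv.iterate m) _]
    _ ≤ M ^ m * ‖R^[m] ((op x)^[k] y)‖ := norm_iterate_le hM hRinv m _
    _ = M ^ m * ‖(op (R^[m] x))^[k] (R^[m] y)‖ := by rw [(hRm.iterate_right k).eq]
    _ ≤ M ^ m * ((K * ‖R^[m] x‖) ^ k * ‖R^[m] y‖) := by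
      gcongr
      exact norm_iterate_le (by positivity) (hop _) k _
    _ ≤ M ^ m * ((K * (c ^ m * ‖x‖)) ^ k * (c ^ m * ‖y‖)) := by
      gcongr <;> exact norm_iterate_le hc hRc m _
    _ = (K * ‖x‖) ^ k * ‖y‖ * (M * c ^ (k + 1)) ^ m := by ring

section Normed

variable {𝕜 E F : Type*} [NontriviallyNormedField 𝕜] [CompleteSpace 𝕜]
  [NormedAddCommGroup E] [NormedSpace 𝕜 E] [FiniteDimensional 𝕜 E]
  [NormedAddCommGroup F] [NormedSpace 𝕜 F]

theorem ContinuousLinearMap.tendsto_norm_zero_of_tendsto_apply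
    {ι : Type*} {l : Filter ι} {u : ι → E →L[𝕜] F} (h : ∀ x, Tendsto (fun i => u i x) l (𝓝 0)) :
    Tendsto (fun i => ‖u i‖) l (𝓝 0) := by
  let b := Module.finBasis 𝕜 E
  obtain ⟨C, -, hC⟩ := b.exists_opNorm_le (F := F)
  have hsum : Tendsto (fun i => C * ∑ j, ‖u i (b j)‖) l (𝓝 0) := by
    simpa using (tendsto_finsetSum _ fun j _ => (h (b j)).norm).const_mul C
  refine squeeze_zero (fun _ => norm_nonneg _) (fun i => hC (by positivity) fun j => ?_) hsum
  exact Finset.single_le_sum (fun j _ => norm_nonneg (u i (b j))) (Finset.mem_univ j)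

theorem LinearMap.exists_norm_iterate_le_of_tendsto (f : E →ₗ[𝕜] E)
    (hf : ∀ x, Tendsto (fun n => f^[n] x) atTop (𝓝 0)) :
    ∃ N, ∃ c < 1, 0 ≤ c ∧ ∀ z, ‖f^[N] z‖ ≤ c * ‖z‖ := by
  let u : ℕ → E →L[𝕜] E := fun n => LinearMap.toContinuousLinearMap (f ^ n)
  have hu : ∀ n z, u n z = f^[n] z := fun n z => Module.End.pow_apply f n z
  obtain ⟨N, hN⟩ := ((ContinuousLinearMap.tendsto_norm_zero_of_tendsto_apply (u := u)
    fun x => by simpa only [hu] using hf x).eventually_lt_const one_pos).exists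
  exact ⟨N, ‖u N‖, hN, norm_nonneg _, fun z => hu N z ▸ (u N).le_opNorm z⟩

theorem LinearMap.isNilpotent_apply_of_semiconj₂_of_tendsto_iterate (S : E ≃ₗ[𝕜] E)
    (B : E →ₗ[𝕜] E →ₗ[𝕜] E) (hSB : Semiconj₂ S (B · ·) (B · ·))
    (hS : ∀ x, Tendsto (fun n => S^[n] x) atTop (𝓝 0)) (x : E) : IsNilpotent (B x) := by
  obtain ⟨N, c, hc1, hc0, hc⟩ := (S : E →ₗ[𝕜] E).exists_norm_iterate_le_of_tendsto hS
  let Sinv : E →L[𝕜] E := LinearMap.toContinuousLinearMap ((S.symm : E →ₗ[𝕜] E) ^ N)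
  have hSinv : ∀ z, ‖S.symm^[N] z‖ ≤ ‖Sinv‖ * ‖z‖ := fun z =>
    Module.End.pow_apply (S.symm : E →ₗ[𝕜] E) N z ▸ Sinv.le_opNorm z
  let Bc := B.toContinuousBilinearMap
  obtain ⟨k, hk⟩ : ∃ k, ‖Sinv‖ * c ^ (k + 1) < 1 := by
    have := ((tendsto_pow_atTop_nhds_zero_of_lt_one hc0 hc1).comp
      (tendsto_add_atTop_nat 1)).const_mul ‖Sinv‖
    simpa using (this.eventually_lt_const (by simp)).exists
  refine ⟨k, LinearMap.ext fun y => norm_le_zero_iff.mp ?_⟩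
  have hinv : LeftInverse S.symm^[N] S^[N] := LeftInverse.iterate S.symm_apply_apply N
  have hbound : ∀ m : ℕ,
      ‖(B x ^ k) y‖ ≤ (‖Bc‖ * ‖x‖) ^ k * ‖y‖ * (‖Sinv‖ * c ^ (k + 1)) ^ m := by
    rw [Module.End.pow_apply]
    exact norm_iterate_le_of_semiconj₂ (hSB.iterate N) hinv (norm_nonneg _) hc0 (norm_nonneg _)
      Bc.le_opNorm₂ hc hSinv x y k
  have hlim := (tendsto_pow_atTop_nhds_zero_of_lt_one (by positivity) hk).const_mul
    ((‖Bc‖ * ‖x‖) ^ k * ‖y‖)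
  exact ge_of_tendsto' (by simpa using hlim) hbound

end Normed

theorem LieAlgebra.isNilpotent_of_tendsto_iterate {𝕜 L : Type*} [NontriviallyNormedField 𝕜]
    [CompleteSpace 𝕜] [LieRing L] [LieAlgebra 𝕜 L] [TopologicalSpace L] [IsTopologicalAddGroup L]
    [ContinuousSMul 𝕜 L] [T2Space L] [FiniteDimensional 𝕜 L] (τ : L ≃ₗ⁅𝕜⁆ L)
    (hτ : ∀ v, Tendsto (fun n => τ^[n] v) atTop (𝓝 0)) : LieRing.IsNilpotent L := by
  let ℓ := (Module.finBasis 𝕜 L).equivFunL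
  let S := ℓ.symm.toLinearEquiv ≪≫ₗ τ.toLinearEquiv ≪≫ₗ ℓ.toLinearEquiv
  let B := (ℓ.toLinearEquiv.conjAlgEquiv 𝕜).toLinearMap ∘ₗ
    (LieAlgebra.ad 𝕜 L : L →ₗ[𝕜] Module.End 𝕜 L) ∘ₗ ℓ.symm.toLinearMap
  have hℓ : Semiconj ℓ τ S := fun v => by simp [S]
  have hSB : Semiconj₂ S (B · ·) (B · ·) := fun x y => by simp [S, B, τ.map_lie]
  have hS : ∀ x, Tendsto (fun n => S^[n] x) atTop (𝓝 0) := fun x => by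
    have := (ℓ.continuous.tendsto 0).comp (hτ (ℓ.symm x))
    simpa only [comp_def, (hℓ.iterate_right _).eq, ℓ.apply_symm_apply, map_zero] using this
  refine (LieAlgebra.isNilpotent_iff_forall (R := 𝕜)).mpr fun v => ?_
  have := LinearMap.isNilpotent_apply_of_semiconj₂_of_tendsto_iterate S B hSB hS (ℓ v)
  rwa [show B (ℓ v) = ℓ.toLinearEquiv.conjAlgEquiv 𝕜 (LieAlgebra.ad 𝕜 L v) by simp [B],
    IsNilpotent.map_iff (AlgEquiv.injective _)] at this

/-- Proposition 3.1(1)-(2): for an automorphism `σ` of a finite-dimensional real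
Lie algebra `𝔤` (with its canonical vector-space topology; all norms on `𝔤` are
equivalent and induce this topology), the stable set
`𝔣ˢ = {v : σⁿ(v) → 0}` is a Lie subalgebra of `𝔤`, and `𝔣ˢ` is nilpotent as a
Lie algebra. -/
theorem stmt_4 {𝔤 : Type*} [LieRing 𝔤] [LieAlgebra ℝ 𝔤]
    [TopologicalSpace 𝔤] [IsTopologicalAddGroup 𝔤] [ContinuousSMul ℝ 𝔤] [T2Space 𝔤]
    [FiniteDimensional ℝ 𝔤]
    (σ : 𝔤 ≃ₗ⁅ℝ⁆ 𝔤) :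
    ∃ 𝔣 : LieSubalgebra ℝ 𝔤,
      (𝔣 : Set 𝔤) = {v : 𝔤 | Tendsto (fun n : ℕ => (⇑σ)^[n] v) atTop (𝓝 0)} ∧
      LieModule.IsNilpotent 𝔣 𝔣 := by
  let 𝔣 := (σ : 𝔤 →ₗ⁅ℝ⁆ 𝔤).stableLieSubalgebra
  refine ⟨𝔣, rfl, ?_⟩
  let τ : 𝔣 ≃ₗ⁅ℝ⁆ 𝔣 := σ.ofSubalgebras 𝔣 𝔣 σ.map_stableLieSubalgebra
  have hτ : Semiconj ((↑) : 𝔣 → 𝔤) τ σ := fun _ => rfl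
  refine LieAlgebra.isNilpotent_of_tendsto_iterate τ fun v => tendsto_subtype_rng.mpr ?_
  simp only [(hτ.iterate_right _).eq, ZeroMemClass.coe_zero]
  exact LieHom.mem_stableLieSubalgebra.mp v.2
end

section
/- Let K be a field, L a Lie algebra over K, and σ : L → L a Lie algebra endomorphism (a K-linear map with σ⁅v, w⁆ = ⁅σ(v), σ(w)⁆ for all v, w ∈ L). Let λ, μ ∈ K and let v, w ∈ L satisfy (σ − λ·id)ᵐ(v) = 0 and (σ − μ·id)ⁿ(w) = 0 for some positive integers m, n. Then (σ − λμ·id)^{m+n−1}(⁅v, w⁆) = 0. In particular, the bracket of the generalized eigenspace of σ for λ with the generalized eigenspace of σ for μ is contained in the generalized eigenspace of σ for λμ. -/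
/-!
For a bilinear map `f` intertwining `φ, ψ` with `χ`, the identity
`(χ - ab) f(x, y) = f((φ - a) x, ψ y) + a • f(x, (ψ - b) y)` lowers the order of `x` or of `y`
by one in each term (as `ψ` commutes with `ψ - b`), so induction on the orders gives the
bound `m + n - 1`. The bracket is intertwined with itself by a Lie algebra endomorphism.
-/

namespace LinearMap

variable {R M N P : Type*} [CommRing R] [AddCommGroup M] [Module R M] [AddCommGroup N] [Module R N]
  [AddCommGroup P] [Module R P]
  (f : M →ₗ[R] N →ₗ[R] P) {φ : Module.End R M} {ψ : Module.End R N} {χ : Module.End R P}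

theorem sub_mul_smul_one_apply_of_intertwines (hf : ∀ x y, χ (f x y) = f (φ x) (ψ y))
    (a b : R) (x : M) (y : N) :
    (χ - (a * b) • 1) (f x y) = f ((φ - a • 1) x) (ψ y) + a • f x ((ψ - b • 1) y) := by
  simp only [sub_apply, smul_apply, Module.End.one_apply, map_sub, map_smul, hf, mul_smul,
    smul_sub]
  abel

theorem pow_sub_mul_smul_one_apply_eq_zero (hf : ∀ x y, χ (f x y) = f (φ x) (ψ y))
    {a b : R} {m n : ℕ} {x : M} {y : N}
    (hx : ((φ - a • 1) ^ m) x = 0) (hy : ((ψ - b • 1) ^ n) y = 0) :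
    ((χ - (a * b) • 1) ^ (m + n - 1)) (f x y) = 0 := by
  induction m generalizing x n y with
  | zero => simp_all
  | succ m ihm =>
    induction n generalizing y with
    | zero => simp_all
    | succ n ihn =>
      have hψ : ((ψ - b • 1) ^ (n + 1)) (ψ y) = 0 := by
        have hcomm : Commute (ψ - b • 1) ψ :=
          (Commute.refl ψ).sub_left ((Commute.one_left ψ).smul_left b)
        rw [← Module.End.mul_apply, (hcomm.pow_left _).eq, Module.End.mul_apply, hy, map_zero]
      have h₁ := ihm (x := (φ - a • 1) x) (by rwa [← Module.End.mul_apply, ← pow_succ]) hψ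
      have h₂ := ihn (y := (ψ - b • 1) y) (by rwa [← Module.End.mul_apply, ← pow_succ])
      rw [show m + (n + 1) - 1 = m + n by omega] at h₁
      rw [show m + 1 + n - 1 = m + n by omega] at h₂
      rw [show m + 1 + (n + 1) - 1 = m + n + 1 by omega, pow_succ, Module.End.mul_apply,
        sub_mul_smul_one_apply_of_intertwines f hf, map_add, map_smul, h₁, h₂, smul_zero,
        add_zero]

end LinearMap

theorem stmt_5_general {K : Type*} [Field K] {L : Type*} [LieRing L] [LieAlgebra K L]
    (σ : L →ₗ⁅K⁆ L) (lam mu : K) (v w : L) (m n : ℕ)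
    (hv : ((σ.toLinearMap - lam • (1 : Module.End K L)) ^ m) v = 0)
    (hw : ((σ.toLinearMap - mu • (1 : Module.End K L)) ^ n) w = 0) :
    ((σ.toLinearMap - (lam * mu) • (1 : Module.End K L)) ^ (m + n - 1)) ⁅v, w⁆ = 0 := by
  simpa using
    (LieModule.toEnd K L L : L →ₗ[K] Module.End K L).pow_sub_mul_smul_one_apply_eq_zero
      (by simp) hv hw

/-- The key linear-algebraic fact in Proposition 3.1: if `σ` is a Lie algebra
endomorphism of `L`, `v` is a generalized eigenvector of `σ` for `λ` of order `m`
and `w` is a generalized eigenvector for `μ` of order `n`, then `⁅v, w⁆` is a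
generalized eigenvector for `λμ` of order at most `m + n - 1`. -/
theorem stmt_5 {K : Type*} [Field K] {L : Type*} [LieRing L] [LieAlgebra K L]
    (σ : L →ₗ⁅K⁆ L) (lam mu : K) (v w : L) (m n : ℕ) (hm : 0 < m) (hn : 0 < n)
    (hv : ((σ.toLinearMap - lam • (1 : Module.End K L)) ^ m) v = 0)
    (hw : ((σ.toLinearMap - mu • (1 : Module.End K L)) ^ n) w = 0) :
    ((σ.toLinearMap - (lam * mu) • (1 : Module.End K L)) ^ (m + n - 1)) ⁅v, w⁆ = 0 :=
  stmt_5_general σ lam mu v w m n hv hw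
end

section
/- Let V be a finite-dimensional real vector space, Φ a finite set of nonzero linear functionals on V, and χ₀ ∈ Φ. Call an element a ∈ V regular if χ(a) ≠ 0 for every χ ∈ Φ. Then for every χ ∈ Φ the following are equivalent: (i) χ = t·χ₀ for some real number t > 0; (ii) χ(a) < 0 for every regular a ∈ V with χ₀(a) < 0. -/
/-- Regular elements exist: a real vector space is not a finite union of proper subspaces. -/
lemma stmt6_exists_regular {V : Type*} [AddCommGroup V] [Module ℝ V]
    (Φ : Finset (V →ₗ[ℝ] ℝ)) (hΦ : ∀ χ ∈ Φ, χ ≠ 0) : ∃ w : V, ∀ ψ ∈ Φ, ψ w ≠ 0 := by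
  classical
  by_contra hcon
  push_neg at hcon
  have hcov : ⋃ p ∈ Φ.image (fun ψ => LinearMap.ker ψ), (p : Set V) = Set.univ := by
    ext x
    simp only [Set.mem_iUnion, Set.mem_univ, iff_true, Finset.mem_image]
    obtain ⟨ψ, hψ, hx⟩ := hcon x
    exact ⟨LinearMap.ker ψ, ⟨ψ, hψ, rfl⟩, hx⟩
  have htop : (⊤ : Submodule ℝ V) ∉ Φ.image (fun ψ => LinearMap.ker ψ) := by
    simp only [Finset.mem_image, not_exists, not_and]
    intro ψ hψ h
    exact hΦ ψ hψ (LinearMap.ker_eq_top.mp h)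
  exact Subspace.biUnion_ne_univ_of_top_notMem htop hcov

/-- Perturbation lemma: given `b` with `χ₀ b < 0 < χ b` and a regular `w`, there is a
regular `a` with `χ₀ a < 0 < χ a`. -/
lemma stmt6_perturb {V : Type*} [AddCommGroup V] [Module ℝ V]
    (Φ : Finset (V →ₗ[ℝ] ℝ)) (w : V) (hw : ∀ ψ ∈ Φ, ψ w ≠ 0)
    (χ₀ χ : V →ₗ[ℝ] ℝ) (b : V) (hb0 : χ₀ b < 0) (hb1 : 0 < χ b) :
    ∃ a : V, (∀ ψ ∈ Φ, ψ a ≠ 0) ∧ χ₀ a < 0 ∧ 0 < χ a := by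
  set δ : ℝ := min ((-χ₀ b) / (|χ₀ w| + 1)) ((χ b) / (|χ w| + 1)) with hδdef
  have hpos0 : (0:ℝ) < |χ₀ w| + 1 := by positivity
  have hpos1 : (0:ℝ) < |χ w| + 1 := by positivity
  have hδpos : 0 < δ := lt_min (div_pos (by linarith) hpos0) (div_pos hb1 hpos1)
  set T : Set ℝ := (fun ψ : V →ₗ[ℝ] ℝ => -ψ b / ψ w) '' (Φ : Set (V →ₗ[ℝ] ℝ)) with hT
  have hTfin : T.Finite := (Φ.finite_toSet).image _
  obtain ⟨t, ht⟩ : (Set.Ioo (0:ℝ) δ \ T).Nonempty :=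
    ((Set.Ioo_infinite hδpos).diff hTfin).nonempty
  obtain ⟨⟨ht0, htδ⟩, htT⟩ := ht
  refine ⟨b + t • w, ?_, ?_, ?_⟩
  · intro ψ hψ
    simp only [map_add, map_smul, smul_eq_mul]
    intro hzero
    apply htT
    have hψw : ψ w ≠ 0 := hw ψ hψ
    refine ⟨ψ, hψ, ?_⟩
    field_simp
    linarith
  · have h1 : t * (|χ₀ w| + 1) < -χ₀ b := by
      have := htδ.trans_le (min_le_left _ _)
      calc t * (|χ₀ w| + 1) < ((-χ₀ b) / (|χ₀ w| + 1)) * (|χ₀ w| + 1) := by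
            exact mul_lt_mul_of_pos_right this hpos0
        _ = -χ₀ b := by field_simp
    have h2 : t * χ₀ w ≤ t * |χ₀ w| :=
      mul_le_mul_of_nonneg_left (le_abs_self _) ht0.le
    simp only [map_add, map_smul, smul_eq_mul]
    nlinarith
  · have h1 : t * (|χ w| + 1) < χ b := by
      have := htδ.trans_le (min_le_right _ _)
      calc t * (|χ w| + 1) < ((χ b) / (|χ w| + 1)) * (|χ w| + 1) := by
            exact mul_lt_mul_of_pos_right this hpos1
        _ = χ b := by field_simp
    have h2 : -(t * χ w) ≤ t * |χ w| := by
      rw [← mul_neg]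
      exact mul_le_mul_of_nonneg_left (neg_le_abs _) ht0.le
    simp only [map_add, map_smul, smul_eq_mul]
    nlinarith

/-- The combinatorial core of Lemma 5.7: for a finite set `Φ` of nonzero linear
functionals on a finite-dimensional real vector space `V` and `χ₀ ∈ Φ`, a weight
`χ ∈ Φ` is a positive multiple of `χ₀` if and only if `χ(a) < 0` for every
regular `a` (i.e. `ψ(a) ≠ 0` for all `ψ ∈ Φ`) with `χ₀(a) < 0`. -/
theorem stmt_6 {V : Type*} [AddCommGroup V] [Module ℝ V] [FiniteDimensional ℝ V]
    (Φ : Finset (V →ₗ[ℝ] ℝ)) (hΦ : ∀ χ ∈ Φ, χ ≠ 0)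
    (χ₀ : V →ₗ[ℝ] ℝ) (hχ₀ : χ₀ ∈ Φ) :
    ∀ χ ∈ Φ,
      ((∃ t : ℝ, 0 < t ∧ χ = t • χ₀) ↔
        (∀ a : V, (∀ ψ ∈ Φ, ψ a ≠ 0) → χ₀ a < 0 → χ a < 0)) := by
  intro χ hχ
  constructor
  · rintro ⟨t, ht, rfl⟩ a _ ha
    simpa using mul_neg_of_pos_of_neg ht ha
  · intro h
    obtain ⟨w, hw⟩ := stmt6_exists_regular Φ hΦ
    -- a regular element on which χ₀ is negative
    have hχ₀w : χ₀ w ≠ 0 := hw χ₀ hχ₀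
    set v : V := if χ₀ w < 0 then w else -w with hv
    have hvreg : ∀ ψ ∈ Φ, ψ v ≠ 0 := by
      intro ψ hψ
      rw [hv]
      split_ifs <;> simp [hw ψ hψ]
    have hχ₀v : χ₀ v < 0 := by
      rw [hv]
      split_ifs with hcase
      · exact hcase
      · rw [map_neg]
        push_neg at hcase
        exact neg_neg_of_pos (lt_of_le_of_ne hcase (Ne.symm hχ₀w))
    by_cases hk : LinearMap.ker χ₀ ≤ LinearMap.ker χ
    · -- χ is a scalar multiple of χ₀
      have hmem : χ ∈ Submodule.span ℝ (Set.range (fun _ : Unit => χ₀)) := by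
        apply mem_span_of_iInf_ker_le_ker (L := fun _ : Unit => χ₀)
        simpa using hk
      rw [Set.range_const, Submodule.mem_span_singleton] at hmem
      obtain ⟨c, hc⟩ := hmem
      have hcne : c ≠ 0 := by
        rintro rfl
        exact hΦ χ hχ (by simpa using hc.symm)
      rcases lt_or_gt_of_ne hcne with hneg | hpos
      · -- negative multiple: contradiction with h at v
        exfalso
        have := h v hvreg hχ₀v
        rw [← hc] at this
        simp only [LinearMap.smul_apply, smul_eq_mul] at this
        nlinarith
      · exact ⟨c, hpos, hc.symm⟩
    · -- independent case: contradiction with h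
      exfalso
      rw [SetLike.le_def] at hk
      push_neg at hk
      obtain ⟨u, hu0, huχ⟩ := hk
      rw [LinearMap.mem_ker] at hu0 huχ
      set u' : V := if 0 < χ u then u else -u with hu'
      have hχu' : 0 < χ u' := by
        rw [hu']
        split_ifs with hcase
        · exact hcase
        · push_neg at hcase
          rw [map_neg]
          exact neg_pos_of_neg (lt_of_le_of_ne hcase huχ)
      have hχ₀u' : χ₀ u' = 0 := by
        rw [hu']; split_ifs <;> simp [hu0]
      -- build b with χ₀ b < 0 < χ b
      set ε : ℝ := (χ u') / (2 * (|χ v| + 1)) with hε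
      have hposden : (0:ℝ) < 2 * (|χ v| + 1) := by positivity
      have hεpos : 0 < ε := div_pos hχu' hposden
      set b : V := u' + ε • v with hb
      have hb0 : χ₀ b < 0 := by
        rw [hb]
        simp only [map_add, map_smul, smul_eq_mul, hχ₀u', zero_add]
        exact mul_neg_of_pos_of_neg hεpos hχ₀v
      have hb1 : 0 < χ b := by
        rw [hb]
        simp only [map_add, map_smul, smul_eq_mul]
        have h1 : ε * (|χ v| + 1) = χ u' / 2 := by
          rw [hε]; field_simp
        have h2 : -(ε * χ v) ≤ ε * |χ v| := by
          rw [← mul_neg]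
          exact mul_le_mul_of_nonneg_left (neg_le_abs _) hεpos.le
        nlinarith
      obtain ⟨a, hareg, ha0, ha1⟩ := stmt6_perturb Φ w hw χ₀ χ b hb0 hb1
      exact absurd (h a hareg ha0) (not_lt.mpr ha1.le)
end

section
/- Let V be a finite-dimensional real vector space, W a real vector space, Φ a finite set of nonzero linear functionals on V, and χ₀ ∈ Φ. Let (E_χ)_{χ ∈ Φ} be a family of linear subspaces of W which are independent and whose sum is all of W (so W = ⊕_{χ ∈ Φ} E_χ). Call an element a ∈ V regular if χ(a) ≠ 0 for every χ ∈ Φ. For regular a set Eˢ(a) = Σ_{χ ∈ Φ, χ(a) < 0} E_χ, and set E_{[χ₀]} = Σ_{χ ∈ Φ, χ = t·χ₀ for some t > 0} E_χ. Then E_{[χ₀]} equals the intersection of Eˢ(a) over all regular a ∈ V with χ₀(a) < 0; moreover, there exist finitely many regular elements a₁, …, a_q ∈ V with χ₀(aᵢ) < 0 such that E_{[χ₀]} = Eˢ(a₁) ∩ ⋯ ∩ Eˢ(a_q). -/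
/-- A finite set of nonzero functionals has a common non-vanishing point. -/
lemma aux_exists_reg {V : Type*} [AddCommGroup V] [Module ℝ V]
    (Φ : Finset (V →ₗ[ℝ] ℝ)) (hΦ : ∀ ψ ∈ Φ, ψ ≠ 0) : ∃ c : V, ∀ ψ ∈ Φ, ψ c ≠ 0 := by
  classical
  induction Φ using Finset.induction_on with
  | empty => exact ⟨0, by simp⟩
  | @insert ψ s hψs ih =>
    obtain ⟨c, hc⟩ := ih (fun η hη => hΦ η (Finset.mem_insert_of_mem hη))
    have hψ0 : ψ ≠ 0 := hΦ ψ (Finset.mem_insert_self _ _)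
    by_cases h : ψ c ≠ 0
    · exact ⟨c, fun η hη => (Finset.mem_insert.mp hη).elim (fun e => e ▸ h) (hc η)⟩
    push_neg at h
    obtain ⟨d, hd⟩ : ∃ d, ψ d ≠ 0 := by
      by_contra hall; push_neg at hall; exact hψ0 (LinearMap.ext fun x => hall x)
    obtain ⟨t, ht⟩ := Infinite.exists_notMem_finset
      (insert (0:ℝ) (s.image fun η => -(η c) / η d))
    refine ⟨c + t • d, fun η hη => ?_⟩
    have happ : η (c + t • d) = η c + t * η d := by simp
    rcases Finset.mem_insert.mp hη with rfl | hηs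
    · rw [happ, h, zero_add]
      exact mul_ne_zero (fun h0 => ht (by rw [h0]; exact Finset.mem_insert_self 0 _)) hd
    · intro h0
      rw [happ] at h0
      by_cases hηd : η d = 0
      · rw [hηd, mul_zero, add_zero] at h0; exact hc η hηs h0
      · apply ht
        refine Finset.mem_insert_of_mem (Finset.mem_image.mpr ⟨η, hηs, ?_⟩)
        field_simp
        linarith

/-- Perturb a point satisfying strict inequalities to a regular point. -/
lemma aux_perturb {V : Type*} [AddCommGroup V] [Module ℝ V] (Φ : Finset (V →ₗ[ℝ] ℝ))
    (χ₀ χ : V →ₗ[ℝ] ℝ) (b c : V) (hc : ∀ ψ ∈ Φ, ψ c ≠ 0)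
    (h0 : χ₀ b < 0) (h1 : 0 < χ b) :
    ∃ a, (∀ ψ ∈ Φ, ψ a ≠ 0) ∧ χ₀ a < 0 ∧ 0 < χ a := by
  classical
  set ε : ℝ := min (-(χ₀ b) / (|χ₀ c| + 1)) (χ b / (|χ c| + 1)) with hε
  have hεpos : 0 < ε :=
    lt_min (div_pos (by linarith) (by positivity)) (div_pos h1 (by positivity))
  set B : Finset ℝ := Φ.image fun ψ => -(ψ b) / ψ c with hB
  have hinf : (Set.Ioo (-ε) ε \ ↑B).Infinite :=
    (Set.Ioo_infinite (by linarith)).diff B.finite_toSet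
  obtain ⟨t, ⟨ht1, ht2⟩, htB⟩ := hinf.nonempty
  have habs : |t| < ε := abs_lt.mpr ⟨ht1, ht2⟩
  refine ⟨b + t • c, fun ψ hψ => ?_, ?_, ?_⟩
  · intro hzero
    simp only [map_add, map_smul, smul_eq_mul] at hzero
    apply htB
    refine Finset.mem_coe.mpr (Finset.mem_image.mpr ⟨ψ, hψ, ?_⟩)
    have hne := hc ψ hψ
    field_simp
    linarith
  · have h2 : |t| < -(χ₀ b) / (|χ₀ c| + 1) := lt_of_lt_of_le habs (min_le_left _ _)
    have h3 : |t| * (|χ₀ c| + 1) < -(χ₀ b) := (lt_div_iff₀ (by positivity)).mp h2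
    have h4 : t * χ₀ c ≤ |t| * |χ₀ c| := (le_abs_self _).trans (abs_mul t _).le
    simp only [map_add, map_smul, smul_eq_mul]
    nlinarith [abs_nonneg t, abs_nonneg (χ₀ c)]
  · have h2 : |t| < χ b / (|χ c| + 1) := lt_of_lt_of_le habs (min_le_right _ _)
    have h3 : |t| * (|χ c| + 1) < χ b := (lt_div_iff₀ (by positivity)).mp h2
    have h4 : -(t * χ c) ≤ |t| * |χ c| := (neg_le_abs _).trans (abs_mul t _).le
    simp only [map_add, map_smul, smul_eq_mul]
    nlinarith [abs_nonneg t, abs_nonneg (χ c)]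

/-- If `χ` is not a positive multiple of `χ₀`, some point separates them. -/
lemma aux_exists_b {V : Type*} [AddCommGroup V] [Module ℝ V] (χ₀ χ : V →ₗ[ℝ] ℝ)
    (h0 : χ₀ ≠ 0) (hχ : χ ≠ 0) (h : ¬ ∃ t : ℝ, 0 < t ∧ χ = t • χ₀) :
    ∃ b, χ₀ b < 0 ∧ 0 < χ b := by
  obtain ⟨v, hv⟩ : ∃ v, χ₀ v ≠ 0 := by
    by_contra hall; push_neg at hall; exact h0 (LinearMap.ext fun x => hall x)
  obtain ⟨w, hw⟩ : ∃ w, χ₀ w < 0 := by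
    rcases lt_or_gt_of_ne hv with h' | h'
    · exact ⟨v, h'⟩
    · exact ⟨-v, by simpa using h'⟩
  by_cases hprop : ∃ t : ℝ, χ = t • χ₀
  · obtain ⟨t, rfl⟩ := hprop
    have ht0 : t ≠ 0 := fun h' => hχ (by simp [h'])
    have htneg : t < 0 := by
      rcases lt_or_gt_of_ne ht0 with h' | h'
      · exact h'
      · exact absurd ⟨t, h', rfl⟩ h
    exact ⟨w, hw, by simpa [smul_eq_mul] using mul_pos_of_neg_of_neg htneg hw⟩
  · push_neg at hprop
    obtain ⟨u, hu0, huχ⟩ : ∃ u, χ₀ u = 0 ∧ χ u ≠ 0 := by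
      by_contra hall
      push_neg at hall
      apply hprop (χ v / χ₀ v)
      ext x
      have hker : χ₀ (x - (χ₀ x / χ₀ v) • v) = 0 := by
        simp only [map_sub, map_smul, smul_eq_mul]
        field_simp
        ring
      have h2 := hall _ hker
      simp only [map_sub, map_smul, smul_eq_mul] at h2
      simp only [LinearMap.smul_apply, smul_eq_mul]
      field_simp at h2 ⊢
      linarith
    obtain ⟨u', hu'0, hu'⟩ : ∃ u', χ₀ u' = 0 ∧ 0 < χ u' := by
      rcases lt_or_gt_of_ne huχ with h' | h'
      · exact ⟨-u, by simp [hu0], by simpa using h'⟩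
      · exact ⟨u, hu0, h'⟩
    refine ⟨w + ((1 + |χ w|) / χ u') • u', ?_, ?_⟩
    · simpa [map_add, map_smul, smul_eq_mul, hu'0] using hw
    · have heq : χ (w + ((1 + |χ w|) / χ u') • u') = χ w + (1 + |χ w|) := by
        simp only [map_add, map_smul, smul_eq_mul]
        field_simp
      rw [heq]
      have := abs_nonneg (χ w)
      have := neg_abs_le (χ w)
      linarith

lemma aux_disj {ι W : Type*} [AddCommGroup W] [Module ℝ W] {t : ι → Submodule ℝ W}
    (ht : iSupIndep t) (s : Finset ι) (y : Set ι) (hd : ∀ i ∈ s, i ∉ y) :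
    Disjoint (⨆ i ∈ s, t i) (⨆ i ∈ y, t i) := by
  classical
  induction s using Finset.induction_on with
  | empty => simp
  | @insert a s ha ih =>
    have ihd := ih fun i hi => hd i (Finset.mem_insert_of_mem hi)
    have hCX : (⨆ i ∈ y, t i) ⊔ (⨆ i ∈ s, t i) = ⨆ i ∈ (y ∪ ↑s : Set ι), t i :=
      (iSup_union).symm
    have hta : Disjoint (t a) ((⨆ i ∈ y, t i) ⊔ (⨆ i ∈ s, t i)) := by
      rw [hCX]
      exact ht.disjoint_biSup (by simp [ha, hd a (Finset.mem_insert_self _ _)])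
    rw [Finset.iSup_insert, disjoint_iff]
    have key : (t a ⊔ ⨆ i ∈ s, t i) ⊓ ((⨆ i ∈ y, t i) ⊔ (⨆ i ∈ s, t i))
        = ⨆ i ∈ s, t i := by
      rw [sup_comm (t a) _, sup_inf_assoc_of_le _ le_sup_right, hta.eq_bot, sup_bot_eq]
    have le1 : (t a ⊔ ⨆ i ∈ s, t i) ⊓ (⨆ i ∈ y, t i) ≤ ⨆ i ∈ s, t i := by
      exact le_trans (inf_le_inf_left _ le_sup_left) key.le
    have le2 : (t a ⊔ ⨆ i ∈ s, t i) ⊓ (⨆ i ∈ y, t i) ≤ ⨆ i ∈ y, t i := inf_le_right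
    have := le_inf le1 le2
    rwa [ihd.eq_bot, le_bot_iff] at this

lemma aux_inf_le {ι W : Type*} [AddCommGroup W] [Module ℝ W] {t : ι → Submodule ℝ W}
    (ht : iSupIndep t) (s : Finset ι) (q : ι → Prop) [DecidablePred q] :
    (⨆ i ∈ s, t i) ⊓ (⨆ (i) (_ : q i), t i) ≤ ⨆ i ∈ s.filter q, t i := by
  classical
  have hq : (⨆ (i) (_ : q i), t i) = ⨆ i ∈ ({i | q i} : Set ι), t i := rfl
  have hsplit : (⨆ i ∈ s, t i)
      = (⨆ i ∈ s.filter q, t i) ⊔ (⨆ i ∈ s.filter (fun i => ¬ q i), t i) := by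
    rw [← Finset.iSup_union, Finset.filter_union_filter_not_eq]
  have hle : (⨆ i ∈ s.filter q, t i) ≤ ⨆ (i) (_ : q i), t i :=
    biSup_mono fun i hi => (Finset.mem_filter.mp hi).2
  have hdisj : Disjoint (⨆ i ∈ s.filter (fun i => ¬ q i), t i) (⨆ (i) (_ : q i), t i) := by
    rw [hq]
    exact aux_disj ht _ _ fun i hi => (Finset.mem_filter.mp hi).2
  calc (⨆ i ∈ s, t i) ⊓ (⨆ (i) (_ : q i), t i)
      = (⨆ i ∈ s.filter q, t i) ⊔
          ((⨆ i ∈ s.filter (fun i => ¬ q i), t i) ⊓ ⨆ (i) (_ : q i), t i) := by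
        rw [hsplit, sup_inf_assoc_of_le _ hle]
    _ = (⨆ i ∈ s.filter q, t i) ⊔ ⊥ := by rw [hdisj.eq_bot]
    _ ≤ ⨆ i ∈ s.filter q, t i := by simp

lemma aux_iInf {ι W : Type*} [AddCommGroup W] [Module ℝ W] {t : ι → Submodule ℝ W}
    (ht : iSupIndep t) (htop : (⨆ i, t i) = ⊤) {J : Type*}
    (T : Finset J) (F : J → Finset ι) (p : ι → Prop)
    (hp : ∀ i, (∀ j ∈ T, i ∈ F j) → p i) :
    (⨅ j ∈ T, ⨆ i ∈ F j, t i) ≤ ⨆ (i) (_ : p i), t i := by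
  classical
  induction T using Finset.induction_on generalizing p with
  | empty =>
    have hall : ∀ i, p i := fun i => hp i (by simp)
    refine le_trans le_top ?_
    rw [← htop]
    exact iSup_le fun i => le_iSup₂_of_le i (hall i) le_rfl
  | @insert j T hj ih =>
    rw [Finset.iInf_insert]
    have step1 : (⨅ j' ∈ T, ⨆ i ∈ F j', t i)
        ≤ ⨆ (i) (_ : ∀ j' ∈ T, i ∈ F j'), t i := ih _ (fun i hi => hi)
    refine le_trans (inf_le_inf_left _ step1) ?_
    refine le_trans (aux_inf_le ht (F j) (fun i => ∀ j' ∈ T, i ∈ F j')) ?_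
    refine iSup₂_le fun i hi => ?_
    obtain ⟨hiFj, hiT⟩ := Finset.mem_filter.mp hi
    refine le_iSup₂_of_le i (hp i fun j' hj' => ?_) le_rfl
    rcases Finset.mem_insert.mp hj' with rfl | hj'T
    · exact hiFj
    · exact hiT j' hj'T


/-- Lemma 5.7: with `W = ⊕_{χ ∈ Φ} E_χ` a decomposition into Lyapunov (weight)
spaces for a finite set `Φ` of nonzero functionals on a finite-dimensional real
vector space `V`, the coarse Lyapunov subspace
`E_{[χ₀]} = Σ_{χ positively proportional to χ₀} E_χ` equals the intersection of
the stable subspaces `Eˢ(a) = Σ_{χ(a) < 0} E_χ` over all regular `a` with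
`χ₀(a) < 0`, and finitely many such `a` suffice. -/
theorem stmt_7 {V : Type*} [AddCommGroup V] [Module ℝ V] [FiniteDimensional ℝ V]
    {W : Type*} [AddCommGroup W] [Module ℝ W]
    (Φ : Finset (V →ₗ[ℝ] ℝ)) (hΦ : ∀ χ ∈ Φ, χ ≠ 0)
    (χ₀ : V →ₗ[ℝ] ℝ) (hχ₀ : χ₀ ∈ Φ)
    (E : (V →ₗ[ℝ] ℝ) → Submodule ℝ W)
    (hindep : iSupIndep (fun χ : Φ => E χ))
    (hspan : (⨆ χ ∈ Φ, E χ) = ⊤) :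
    -- `E_{[χ₀]}`, the sum over weights positively proportional to `χ₀`:
    (⨆ χ ∈ Φ, ⨆ _ : ∃ t : ℝ, 0 < t ∧ χ = t • χ₀, E χ) =
      (⨅ a : V, ⨅ _ : (∀ ψ ∈ Φ, ψ a ≠ 0) ∧ χ₀ a < 0,
        ⨆ χ ∈ Φ, ⨆ _ : χ a < 0, E χ) ∧
    ∃ (q : ℕ) (f : Fin q → V),
      (∀ i, (∀ ψ ∈ Φ, ψ (f i) ≠ 0) ∧ χ₀ (f i) < 0) ∧
      (⨆ χ ∈ Φ, ⨆ _ : ∃ t : ℝ, 0 < t ∧ χ = t • χ₀, E χ) =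
        ⨅ i, ⨆ χ ∈ Φ, ⨆ _ : χ (f i) < 0, E χ := by
  classical
  -- abbreviations
  set PosP : (V →ₗ[ℝ] ℝ) → Prop := fun χ => ∃ t : ℝ, 0 < t ∧ χ = t • χ₀ with hPosP
  -- conversion of big sups to subtype form
  have conv : ∀ P : (V →ₗ[ℝ] ℝ) → Prop,
      (⨆ χ ∈ Φ, ⨆ _ : P χ, E χ) = ⨆ (x : Φ) (_ : P ↑x), E ↑x := by
    intro P
    apply le_antisymm
    · exact iSup₂_le fun χ hχ => iSup_le fun hP =>
        le_iSup₂_of_le (⟨χ, hχ⟩ : Φ) hP le_rfl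
    · exact iSup₂_le fun x hx => le_iSup₂_of_le (↑x) x.2 (le_iSup_of_le hx le_rfl)
  have htop : (⨆ x : Φ, E ↑x) = ⊤ := by
    apply top_unique
    rw [← hspan]
    exact iSup₂_le fun χ hχ => le_iSup_of_le (⟨χ, hχ⟩ : Φ) le_rfl
  -- claim 1 : the coarse space is contained in each stable space
  have claim1 : ∀ a : V, χ₀ a < 0 →
      (⨆ χ ∈ Φ, ⨆ _ : PosP χ, E χ) ≤ ⨆ χ ∈ Φ, ⨆ _ : χ a < 0, E χ := by
    intro a ha
    refine iSup₂_le fun χ hχ => iSup_le fun hP => ?_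
    obtain ⟨s, hs, rfl⟩ := hP
    refine le_iSup₂_of_le (s • χ₀) hχ (le_iSup_of_le ?_ le_rfl)
    show s • χ₀ a < 0
    simpa [smul_eq_mul] using mul_neg_of_pos_of_neg hs ha
  -- choose witnesses for non-positively-proportional weights
  have hex : ∀ χ : V →ₗ[ℝ] ℝ, ∃ a : V, (χ ∈ Φ ∧ ¬ PosP χ) →
      ((∀ ψ ∈ Φ, ψ a ≠ 0) ∧ χ₀ a < 0 ∧ 0 < χ a) := by
    intro χ
    by_cases hχD : χ ∈ Φ ∧ ¬ PosP χ
    · obtain ⟨b, hb0, hb1⟩ := aux_exists_b χ₀ χ (hΦ χ₀ hχ₀) (hΦ χ hχD.1) hχD.2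
      obtain ⟨c, hc⟩ := aux_exists_reg Φ hΦ
      obtain ⟨a, ha⟩ := aux_perturb Φ χ₀ χ b c hc hb0 hb1
      exact ⟨a, fun _ => ha⟩
    · exact ⟨0, fun h => absurd h hχD⟩
  choose g hg using hex
  set D : Finset (V →ₗ[ℝ] ℝ) := Φ.filter (fun χ => ¬ PosP χ) with hD
  set q : ℕ := Fintype.card D with hq
  set e : D ≃ Fin q := Fintype.equivFin D with he
  set f : Fin q → V := fun i => g ↑(e.symm i) with hf
  have hmemD : ∀ χ ∈ D, (∀ ψ ∈ Φ, ψ (g χ) ≠ 0) ∧ χ₀ (g χ) < 0 ∧ 0 < χ (g χ) := by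
    intro χ hχ
    have := Finset.mem_filter.mp hχ
    exact hg χ ⟨this.1, this.2⟩
  have hfgood : ∀ i, (∀ ψ ∈ Φ, ψ (f i) ≠ 0) ∧ χ₀ (f i) < 0 := by
    intro i
    obtain ⟨h1, h2, _⟩ := hmemD ↑(e.symm i) (e.symm i).2
    exact ⟨h1, h2⟩
  -- claim 2 : the finite intersection is contained in the coarse space
  have claim2 : (⨅ i, ⨆ χ ∈ Φ, ⨆ _ : χ (f i) < 0, E χ)
      ≤ ⨆ χ ∈ Φ, ⨆ _ : PosP χ, E χ := by
    rw [conv PosP]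
    set t : Φ → Submodule ℝ W := fun x => E ↑x with ht
    set F : Fin q → Finset Φ :=
      fun j => Finset.univ.filter (fun x : Φ => (x : V →ₗ[ℝ] ℝ) (f j) < 0) with hF
    have hconv2 : ∀ j, (⨆ χ ∈ Φ, ⨆ _ : χ (f j) < 0, E χ) = ⨆ x ∈ F j, t x := by
      intro j
      rw [conv (fun χ => χ (f j) < 0)]
      exact iSup_congr fun x => iSup_congr_Prop (by simp [hF]) (fun _ => rfl)
    have hmain : (⨅ j ∈ (Finset.univ : Finset (Fin q)), ⨆ x ∈ F j, t x)
        ≤ ⨆ (x : Φ) (_ : PosP ↑x), t x := by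
      refine aux_iInf hindep htop Finset.univ F (fun x => PosP ↑x) ?_
      intro x hx
      by_contra hxP
      have hxD : (x : V →ₗ[ℝ] ℝ) ∈ D := Finset.mem_filter.mpr ⟨x.2, hxP⟩
      have hx1 := hx (e ⟨↑x, hxD⟩) (Finset.mem_univ _)
      have hx2 : (x : V →ₗ[ℝ] ℝ) (f (e ⟨↑x, hxD⟩)) < 0 := by
        simpa [hF] using hx1
      have hx3 : f (e ⟨↑x, hxD⟩) = g ↑x := by
        rw [hf]
        simp
      rw [hx3] at hx2
      exact absurd hx2 (not_lt.mpr (hmemD ↑x hxD).2.2.le)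
    calc (⨅ i, ⨆ χ ∈ Φ, ⨆ _ : χ (f i) < 0, E χ)
        = ⨅ j ∈ (Finset.univ : Finset (Fin q)), ⨆ x ∈ F j, t x := by
          simp only [Finset.mem_univ, iInf_true]
          exact iInf_congr hconv2
      _ ≤ ⨆ (x : Φ) (_ : PosP ↑x), t x := hmain
  refine ⟨?_, q, f, hfgood, ?_⟩
  · apply le_antisymm
    · exact le_iInf fun a => le_iInf fun hA => claim1 a hA.2
    · refine le_trans ?_ claim2
      exact le_iInf fun i => iInf_le_of_le (f i) (iInf_le _ ⟨(hfgood i).1, (hfgood i).2⟩)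
  · exact le_antisymm (le_iInf fun i => claim1 (f i) (hfgood i).2) claim2
end
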